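/- Let Ω ⊂ ℝⁿ be open and bounded. Let A = (a_{ij}) : ℝⁿ → ℝ^{n×n} have C¹ ℤⁿ-periodic entries bounded together with their first derivatives; let N_m ∈ C²(ℝⁿ) (1 ≤ m ≤ n) be ℤⁿ-periodic classical solutions of ∂_{y_i}(a_{ij} ∂_{y_j} N_m) = −∂_{y_i} a_{im}, with N_m, ∇N_m, ∇²N_m bounded; let a⁰_{kl} = ∫_{[0,1]ⁿ} (a_{kl} + a_{km} ∂_{y_m} N_l) dy; let M_{kl} ∈ C²(ℝⁿ) (1 ≤ k,l ≤ n) be ℤⁿ-periodic classical solutions of −∂_{y_i}(a_{ij} ∂_{y_j} M_{kl}) = a_{kl} + a_{km} ∂_{y_m} N_l − a⁰_{kl} + ∂_{y_i}(a_{ik} N_l), with M_{kl}, ∇M_{kl} bounded; and let u₀ ∈ C⁴(Ω) satisfy −a⁰_{ij} ∂²_{ij} u₀ = f pointwise in Ω, with all partial derivatives of u₀ up to order 4 bounded on Ω. Then there exists a constant C, depending only on the stated bounds on a, N, M, and u₀ (and on n), such that for every 0 < ε ≤ 1 the second-order approximation u_ε^{(2)}(x) = u₀(x) + ε·N_m(x/ε)·∂_m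 u₀(x) + ε²·M_{kl}(x/ε)·∂²_{kl} u₀(x) satisfies sup_{x ∈ Ω} | −∂_{x_i}( a_{ij}(x/ε) ∂_{x_j} u_ε^{(2)}(x) ) − f(x) | ≤ C·ε. -/

import Mathlib

open MeasureTheory

/-- `u : ℝⁿ → ℝ` is ℤⁿ-periodic: `u (y + k) = u y` for all `y ∈ ℝⁿ`, `k ∈ ℤⁿ`. -/
def ZnPeriodic (n : ℕ) (u : EuclideanSpace ℝ (Fin n) → ℝ) : Prop :=
  ∀ (y : EuclideanSpace ℝ (Fin n)) (k : Fin n → ℤ),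
    u (y + (EuclideanSpace.equiv (Fin n) ℝ).symm (fun i => (k i : ℝ))) = u y

/-- The periodic unit cell `Y = [0,1]ⁿ`. -/
def unitCell (n : ℕ) : Set (EuclideanSpace ℝ (Fin n)) :=
  {y | ∀ i, y i ∈ Set.Icc (0 : ℝ) 1}

/-- The partial derivative `∂_{yᵢ} f` of `f : ℝⁿ → ℝ`. -/
noncomputable def pderiv' (n : ℕ) (i : Fin n)
    (f : EuclideanSpace ℝ (Fin n) → ℝ) (y : EuclideanSpace ℝ (Fin n)) : ℝ :=
  fderiv ℝ f y (EuclideanSpace.single i (1 : ℝ))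

/-!
Write `y = x/ε` and let `σᵢ = aᵢⱼ(y) ∂ⱼ u_ε` be the flux of the ansatz. Differentiating the ansatz
and regrouping gives
  `σᵢ = Pᵢₘ(y) ∂ₘu₀ + ε Qᵢₖₗ(y) ∂²ₖₗu₀ + ε² Rᵢⱼₖₗ(y) ∂³ⱼₖₗu₀`,
with `Pᵢₘ = aᵢₘ + aᵢⱼ ∂ⱼNₘ`, `Qᵢₖₗ = aᵢₖ Nₗ + aᵢⱼ ∂ⱼMₖₗ` and `Rᵢⱼₖₗ = aᵢⱼ Mₖₗ`. Since
`∂ᵢ(φ(x/ε) ψ(x)) = ε⁻¹ (∂ᵢφ)(x/ε) ψ(x) + φ(x/ε) ∂ᵢψ(x)`, the divergence of `σ` has an `ε⁻¹` term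
`∂ᵢPᵢₘ ∂ₘu₀`, which vanishes by the first cell problem, and an `ε⁰` term
`(Pₖₗ + ∂ᵢQᵢₖₗ) ∂²ₖₗu₀ = a⁰ₖₗ ∂²ₖₗu₀ = -f` by the second one. What remains is `ε` times a
finite sum of products of `a`, `∇a`, `N`, `M`, `∇M` and third and fourth derivatives of `u₀`.
-/

namespace Homogenization

variable {n : ℕ}

local notation "E" => EuclideanSpace ℝ (Fin n)

theorem pderiv'_congr_of_eventuallyEq {f g : E → ℝ} {x : E} (h : f =ᶠ[nhds x] g)
    (i : Fin n) : pderiv' n i f x = pderiv' n i g x := by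
  simp only [pderiv', h.fderiv_eq]

theorem pderiv'_add {f g : E → ℝ} {x : E} (hf : DifferentiableAt ℝ f x)
    (hg : DifferentiableAt ℝ g x) (i : Fin n) :
    pderiv' n i (fun z => f z + g z) x = pderiv' n i f x + pderiv' n i g x := by
  simp [pderiv', fderiv_fun_add hf hg]

theorem pderiv'_mul {f g : E → ℝ} {x : E} (hf : DifferentiableAt ℝ f x)
    (hg : DifferentiableAt ℝ g x) (i : Fin n) :
    pderiv' n i (fun z => f z * g z) x = pderiv' n i f x * g x + f x * pderiv' n i g x := by
  simp [pderiv', fderiv_fun_mul hf hg]; ring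

theorem pderiv'_const_mul {f : E → ℝ} {x : E} (hf : DifferentiableAt ℝ f x) (c : ℝ)
    (i : Fin n) : pderiv' n i (fun z => c * f z) x = c * pderiv' n i f x := by
  simp [pderiv', fderiv_const_mul hf]

theorem pderiv'_sum {ι : Type*} [Fintype ι] {F : ι → E → ℝ} {x : E}
    (h : ∀ p, DifferentiableAt ℝ (F p) x) (i : Fin n) :
    pderiv' n i (fun z => ∑ p, F p z) x = ∑ p, pderiv' n i (F p) x := by
  simp [pderiv', fderiv_fun_sum fun p _ => h p]

theorem pderiv'_comp_smul (g : E → ℝ) (c : ℝ) (x : E) (i : Fin n) :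
    pderiv' n i (fun z => g (c • z)) x = c * pderiv' n i g (c • x) := by
  simp [pderiv', fderiv_comp_smul (f := g) c]

theorem _root_.DifferentiableAt.comp_const_smul {g : E → ℝ} {c : ℝ} {x : E}
    (hg : DifferentiableAt ℝ g (c • x)) : DifferentiableAt ℝ (fun z => g (c • z)) x :=
  hg.comp x (differentiableAt_id.const_smul c)

theorem differentiableAt_sum_mul_comp_smul {ι : Type*} [Fintype ι] {g h : ι → E → ℝ} {c : ℝ}
    {x : E} (hg : ∀ p, DifferentiableAt ℝ (g p) (c • x))
    (hh : ∀ p, DifferentiableAt ℝ (h p) x) :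
    DifferentiableAt ℝ (fun z => ∑ p, g p (c • z) * h p z) x :=
  DifferentiableAt.fun_sum fun p _ => (hg p).comp_const_smul.fun_mul (hh p)

theorem pderiv'_sum_mul_comp_smul {ι : Type*} [Fintype ι] {g h : ι → E → ℝ} {c : ℝ}
    {x : E} (hg : ∀ p, DifferentiableAt ℝ (g p) (c • x))
    (hh : ∀ p, DifferentiableAt ℝ (h p) x) (i : Fin n) :
    pderiv' n i (fun z => ∑ p, g p (c • z) * h p z) x
      = c * ∑ p, pderiv' n i (g p) (c • x) * h p x + ∑ p, g p (c • x) * pderiv' n i (h p) x := by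
  rw [pderiv'_sum fun p => (hg p).comp_const_smul.fun_mul (hh p), Finset.mul_sum,
    ← Finset.sum_add_distrib]
  refine Finset.sum_congr rfl fun p _ => ?_
  rw [pderiv'_mul (hg p).comp_const_smul (hh p), pderiv'_comp_smul]
  ring

theorem differentiable_pderiv' {f : E → ℝ} (hf : ContDiff ℝ 2 f) (i : Fin n) :
    Differentiable ℝ (pderiv' n i f) :=
  ((hf.fderiv_right (m := 1) le_rfl).clm_apply contDiff_const).differentiable one_ne_zero

theorem contDiffOn_pderiv' {f : E → ℝ} {s : Set E} {m k : WithTop ℕ∞}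
    (hf : ContDiffOn ℝ k f s) (hs : IsOpen s) (h : m + 1 ≤ k) (i : Fin n) :
    ContDiffOn ℝ m (pderiv' n i f) s :=
  (hf.fderiv_of_isOpen hs h).clm_apply contDiffOn_const

theorem differentiableAt_iterated_pderiv' {u : E → ℝ} {s : Set E} {x : E}
    (hu : ContDiffOn ℝ 4 u s) (hs : IsOpen s) (hx : x ∈ s) :
    DifferentiableAt ℝ u x ∧ (∀ l, DifferentiableAt ℝ (pderiv' n l u) x)
      ∧ (∀ k l, DifferentiableAt ℝ (pderiv' n k (pderiv' n l u)) x)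
      ∧ (∀ j k l, DifferentiableAt ℝ (pderiv' n j (pderiv' n k (pderiv' n l u))) x) := by
  have hd {k : ℕ} {f : E → ℝ} (hf : ContDiffOn ℝ (k + 1) f s) : DifferentiableAt ℝ f x :=
    (hf.differentiableOn (by simp)).differentiableAt (hs.mem_nhds hx)
  have hu₁ l : ContDiffOn ℝ 3 (pderiv' n l u) s := contDiffOn_pderiv' hu hs (by norm_num) l
  have hu₂ k l : ContDiffOn ℝ 2 (pderiv' n k (pderiv' n l u)) s :=
    contDiffOn_pderiv' (hu₁ l) hs (by norm_num) k
  exact ⟨hd hu, fun l => hd (hu₁ l), fun k l => hd (hu₂ k l),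
    fun j k l => hd (contDiffOn_pderiv' (hu₂ k l) hs (by norm_num) j (m := 1))⟩

theorem abs_pderiv'_le {g : E → ℝ} {y : E} {K : ℝ} (h : ‖fderiv ℝ g y‖ ≤ K)
    (i : Fin n) : |pderiv' n i g y| ≤ K := by
  have := (fderiv ℝ g y).le_opNorm (EuclideanSpace.single i 1)
  simp only [PiLp.norm_single, norm_one, mul_one] at this
  exact this.trans h

theorem abs_mul_le_of_le {a b A B : ℝ} (ha : |a| ≤ A) (hb : |b| ≤ B) :
    |a * b| ≤ A * B := by
  rw [abs_mul]
  exact mul_le_mul ha hb (abs_nonneg b) ((abs_nonneg a).trans ha)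

theorem abs_sum_le_card_mul {ι : Type*} [Fintype ι] {f : ι → ℝ} {C : ℝ}
    (h : ∀ p, |f p| ≤ C) : |∑ p, f p| ≤ Fintype.card ι * C := by
  simpa using (Finset.abs_sum_le_sum_abs f Finset.univ).trans (Finset.sum_le_sum fun p _ => h p)

/- The coefficients `P`, `Q`, `R` of the flux of the ansatz; the index pairs `(k, l)` and triples
`(j, k, l)` range over product types, so that one product rule differentiates all three terms. -/
noncomputable def firstFlux (a : Fin n → Fin n → E → ℝ) (N : Fin n → E → ℝ) (i m : Fin n)
    (y : E) : ℝ :=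
  a i m y + ∑ j, a i j y * pderiv' n j (N m) y

noncomputable def secondFlux (a : Fin n → Fin n → E → ℝ) (N : Fin n → E → ℝ)
    (M : Fin n → Fin n → E → ℝ) (i : Fin n) (p : Fin n × Fin n) (y : E) : ℝ :=
  a i p.1 y * N p.2 y + ∑ j, a i j y * pderiv' n j (M p.1 p.2) y

noncomputable def thirdFlux (a : Fin n → Fin n → E → ℝ) (M : Fin n → Fin n → E → ℝ)
    (i : Fin n) (q : Fin n × Fin n × Fin n) (y : E) : ℝ :=
  a i q.1 y * M q.2.1 q.2.2 y

variable {a : Fin n → Fin n → EuclideanSpace ℝ (Fin n) → ℝ}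
  {N : Fin n → EuclideanSpace ℝ (Fin n) → ℝ}
  {M : Fin n → Fin n → EuclideanSpace ℝ (Fin n) → ℝ}

theorem differentiable_firstFlux (ha : ∀ i j, Differentiable ℝ (a i j))
    (hN : ∀ j m, Differentiable ℝ (pderiv' n j (N m))) (i m : Fin n) :
    Differentiable ℝ (firstFlux a N i m) := by
  unfold firstFlux
  fun_prop

theorem differentiable_secondFlux (ha : ∀ i j, Differentiable ℝ (a i j))
    (hN : ∀ m, Differentiable ℝ (N m)) (hM : ∀ j k l, Differentiable ℝ (pderiv' n j (M k l)))
    (i : Fin n) (p : Fin n × Fin n) : Differentiable ℝ (secondFlux a N M i p) := by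
  unfold secondFlux
  fun_prop

theorem differentiable_thirdFlux (ha : ∀ i j, Differentiable ℝ (a i j))
    (hM : ∀ k l, Differentiable ℝ (M k l)) (i : Fin n) (q : Fin n × Fin n × Fin n) :
    Differentiable ℝ (thirdFlux a M i q) := by
  unfold thirdFlux
  fun_prop

theorem sum_pderiv'_firstFlux (ha : ∀ i j, Differentiable ℝ (a i j))
    (hN : ∀ j m, Differentiable ℝ (pderiv' n j (N m)))
    (hNcell : ∀ (m : Fin n) (y : E),
      (∑ i, pderiv' n i (fun z => ∑ j, a i j z * pderiv' n j (N m) z) y)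
        = -∑ i, pderiv' n i (a i m) y)
    (m : Fin n) (y : E) :
    ∑ i, pderiv' n i (firstFlux a N i m) y = 0 := by
  have hsum i : DifferentiableAt ℝ (fun z => ∑ j, a i j z * pderiv' n j (N m) z) y := by
    fun_prop
  unfold firstFlux
  simp only [pderiv'_add (ha _ _ y) (hsum _), Finset.sum_add_distrib, hNcell]
  ring

theorem sum_pderiv'_secondFlux {a0 : Fin n → Fin n → ℝ} (ha : ∀ i j, Differentiable ℝ (a i j))
    (hN : ∀ m, Differentiable ℝ (N m)) (hM : ∀ j k l, Differentiable ℝ (pderiv' n j (M k l)))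
    (hMcell : ∀ (k l : Fin n) (y : E),
      -(∑ i, pderiv' n i (fun z => ∑ j, a i j z * pderiv' n j (M k l) z) y)
        = a k l y + (∑ m, a k m y * pderiv' n m (N l) y) - a0 k l
          + ∑ i, pderiv' n i (fun z => a i k z * N l z) y)
    (p : Fin n × Fin n) (y : E) :
    ∑ i, pderiv' n i (secondFlux a N M i p) y = a0 p.1 p.2 - firstFlux a N p.1 p.2 y := by
  have hsum i : DifferentiableAt ℝ (fun z => ∑ j, a i j z * pderiv' n j (M p.1 p.2) z) y := by
    fun_prop
  have hprod i : DifferentiableAt ℝ (fun z => a i p.1 z * N p.2 z) y := by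
    fun_prop
  unfold secondFlux firstFlux
  simp only [pderiv'_add (hprod _) (hsum _), Finset.sum_add_distrib]
  linarith [hMcell p.1 p.2 y]

theorem abs_secondFlux_le {Ka Kn Km : ℝ} (habd : ∀ i j y, |a i j y| ≤ Ka)
    (hNbd : ∀ m y, |N m y| ≤ Kn) (hMbd' : ∀ k l y, ‖fderiv ℝ (M k l) y‖ ≤ Km)
    (i : Fin n) (p : Fin n × Fin n) (y : E) :
    |secondFlux a N M i p y| ≤ Ka * Kn + n * (Ka * Km) := by
  have hsum := abs_sum_le_card_mul fun j =>
    abs_mul_le_of_le (habd i j y) (abs_pderiv'_le (hMbd' p.1 p.2 y) j)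
  simp only [Fintype.card_fin] at hsum
  exact (abs_add_le _ _).trans (add_le_add (abs_mul_le_of_le (habd _ _ y) (hNbd _ y)) hsum)

theorem abs_pderiv'_thirdFlux_le {Ka Km : ℝ} (ha : ∀ i j, Differentiable ℝ (a i j))
    (hM : ∀ k l, Differentiable ℝ (M k l)) (habd : ∀ i j y, |a i j y| ≤ Ka)
    (habd' : ∀ i j y, ‖fderiv ℝ (a i j) y‖ ≤ Ka) (hMbd : ∀ k l y, |M k l y| ≤ Km)
    (hMbd' : ∀ k l y, ‖fderiv ℝ (M k l) y‖ ≤ Km) (i : Fin n) (q : Fin n × Fin n × Fin n)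
    (y : E) : |pderiv' n i (thirdFlux a M i q) y| ≤ Ka * Km + Ka * Km := by
  unfold thirdFlux
  rw [pderiv'_mul (ha _ _ y) (hM _ _ y)]
  exact (abs_add_le _ _).trans (add_le_add
    (abs_mul_le_of_le (abs_pderiv'_le (habd' _ _ y) i) (hMbd _ _ y))
    (abs_mul_le_of_le (habd _ _ y) (abs_pderiv'_le (hMbd' _ _ y) i)))

noncomputable def secondOrderAnsatz (N : Fin n → E → ℝ) (M : Fin n → Fin n → E → ℝ)
    (u₀ : E → ℝ) (ε : ℝ) (x : E) : ℝ :=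
  u₀ x + ε * ∑ m, N m (ε⁻¹ • x) * pderiv' n m u₀ x
    + ε ^ 2 * ∑ k, ∑ l, M k l (ε⁻¹ • x) * pderiv' n k (pderiv' n l u₀) x

theorem pderiv'_secondOrderAnsatz {u₀ : E → ℝ} {ε : ℝ} {x : E} (hε : ε ≠ 0)
    (hN : ∀ m, Differentiable ℝ (N m)) (hM : ∀ k l, Differentiable ℝ (M k l))
    (hu : DifferentiableAt ℝ u₀ x) (hu₁ : ∀ m, DifferentiableAt ℝ (pderiv' n m u₀) x)
    (hu₂ : ∀ k l, DifferentiableAt ℝ (pderiv' n k (pderiv' n l u₀)) x) (j : Fin n) :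
    pderiv' n j (secondOrderAnsatz N M u₀ ε) x
      = pderiv' n j u₀ x + ∑ m, pderiv' n j (N m) (ε⁻¹ • x) * pderiv' n m u₀ x
        + ε * ∑ m, N m (ε⁻¹ • x) * pderiv' n j (pderiv' n m u₀) x
        + ε * ∑ p : Fin n × Fin n,
            pderiv' n j (M p.1 p.2) (ε⁻¹ • x) * pderiv' n p.1 (pderiv' n p.2 u₀) x
        + ε ^ 2 * ∑ p : Fin n × Fin n,
            M p.1 p.2 (ε⁻¹ • x) * pderiv' n j (pderiv' n p.1 (pderiv' n p.2 u₀)) x := by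
  have hpairs : secondOrderAnsatz N M u₀ ε = fun z => u₀ z
      + ε * ∑ m, N m (ε⁻¹ • z) * pderiv' n m u₀ z
      + ε ^ 2 * ∑ p : Fin n × Fin n,
          M p.1 p.2 (ε⁻¹ • z) * pderiv' n p.1 (pderiv' n p.2 u₀) z := by
    funext z
    simp only [secondOrderAnsatz, Fintype.sum_prod_type]
  have h₁ := pderiv'_sum_mul_comp_smul (fun m => hN m _) hu₁ j (c := ε⁻¹)
  have h₂ := pderiv'_sum_mul_comp_smul (fun p : Fin n × Fin n => hM p.1 p.2 _)
    (fun p => hu₂ p.1 p.2) j (c := ε⁻¹)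
  have hd₁ : DifferentiableAt ℝ (fun z => ∑ m, N m (ε⁻¹ • z) * pderiv' n m u₀ z) x := by
    fun_prop
  have hd₂ : DifferentiableAt ℝ (fun z => ∑ p : Fin n × Fin n,
      M p.1 p.2 (ε⁻¹ • z) * pderiv' n p.1 (pderiv' n p.2 u₀) z) x := by
    fun_prop
  rw [hpairs, pderiv'_add (hu.fun_add (hd₁.const_mul ε)) (hd₂.const_mul _) j,
    pderiv'_add hu (hd₁.const_mul ε) j, pderiv'_const_mul hd₁, pderiv'_const_mul hd₂, h₁, h₂]
  field_simp
  ring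

theorem sum_mul_pderiv'_secondOrderAnsatz {u₀ : E → ℝ} {ε : ℝ} {x : E} (hε : ε ≠ 0)
    (hN : ∀ m, Differentiable ℝ (N m)) (hM : ∀ k l, Differentiable ℝ (M k l))
    (hu : DifferentiableAt ℝ u₀ x) (hu₁ : ∀ m, DifferentiableAt ℝ (pderiv' n m u₀) x)
    (hu₂ : ∀ k l, DifferentiableAt ℝ (pderiv' n k (pderiv' n l u₀)) x) (i : Fin n) :
    ∑ j, a i j (ε⁻¹ • x) * pderiv' n j (secondOrderAnsatz N M u₀ ε) x
      = ∑ m, firstFlux a N i m (ε⁻¹ • x) * pderiv' n m u₀ x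
        + ε * ∑ p, secondFlux a N M i p (ε⁻¹ • x) * pderiv' n p.1 (pderiv' n p.2 u₀) x
        + ε ^ 2 * ∑ q, thirdFlux a M i q (ε⁻¹ • x)
            * pderiv' n q.1 (pderiv' n q.2.1 (pderiv' n q.2.2 u₀)) x := by
  set y := ε⁻¹ • x
  have h₁ : ∑ m, firstFlux a N i m y * pderiv' n m u₀ x = ∑ j, a i j y
      * (pderiv' n j u₀ x + ∑ m, pderiv' n j (N m) y * pderiv' n m u₀ x) := by
    simp only [firstFlux, add_mul, mul_add, Finset.sum_add_distrib, Finset.sum_mul,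
      Finset.mul_sum, mul_assoc]
    exact congrArg _ Finset.sum_comm
  have h₂ : ∑ p, secondFlux a N M i p y * pderiv' n p.1 (pderiv' n p.2 u₀) x = ∑ j, a i j y
      * (∑ m, N m y * pderiv' n j (pderiv' n m u₀) x
        + ∑ p : Fin n × Fin n,
            pderiv' n j (M p.1 p.2) y * pderiv' n p.1 (pderiv' n p.2 u₀) x) := by
    simp only [secondFlux, add_mul, mul_add, Finset.sum_add_distrib, Finset.sum_mul,
      Finset.mul_sum, mul_assoc]
    rw [Fintype.sum_prod_type]
    exact congrArg _ Finset.sum_comm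
  have h₃ : ∑ q, thirdFlux a M i q y * pderiv' n q.1 (pderiv' n q.2.1 (pderiv' n q.2.2 u₀)) x
      = ∑ j, a i j y * ∑ p : Fin n × Fin n,
          M p.1 p.2 y * pderiv' n j (pderiv' n p.1 (pderiv' n p.2 u₀)) x := by
    simp only [thirdFlux, Finset.mul_sum, mul_assoc]
    exact Fintype.sum_prod_type _
  rw [h₁, h₂, h₃, Finset.mul_sum, Finset.mul_sum, ← Finset.sum_add_distrib,
    ← Finset.sum_add_distrib]
  refine Finset.sum_congr rfl fun j _ => ?_
  rw [pderiv'_secondOrderAnsatz hε hN hM hu hu₁ hu₂]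
  ring

theorem flux_secondOrderAnsatz_eventuallyEq {u₀ : E → ℝ} {Ω : Set E} {ε : ℝ} {x : E}
    (hΩ : IsOpen Ω) (hx : x ∈ Ω) (hε : ε ≠ 0) (hN : ∀ m, Differentiable ℝ (N m))
    (hM : ∀ k l, Differentiable ℝ (M k l)) (hu₀ : ContDiffOn ℝ 4 u₀ Ω) (i : Fin n) :
    (fun x' => ∑ j, a i j (ε⁻¹ • x') * pderiv' n j (secondOrderAnsatz N M u₀ ε) x')
      =ᶠ[nhds x] fun x' => ∑ m, firstFlux a N i m (ε⁻¹ • x') * pderiv' n m u₀ x'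
        + ε * ∑ p, secondFlux a N M i p (ε⁻¹ • x') * pderiv' n p.1 (pderiv' n p.2 u₀) x'
        + ε ^ 2 * ∑ q, thirdFlux a M i q (ε⁻¹ • x')
            * pderiv' n q.1 (pderiv' n q.2.1 (pderiv' n q.2.2 u₀)) x' := by
  filter_upwards [hΩ.mem_nhds hx] with x' hx'
  obtain ⟨hu, hu₁, hu₂, -⟩ := differentiableAt_iterated_pderiv' hu₀ hΩ hx'
  exact sum_mul_pderiv'_secondOrderAnsatz hε hN hM hu hu₁ hu₂ i

theorem pderiv'_flux_secondOrderAnsatz {u₀ : E → ℝ} {Ω : Set E} {ε : ℝ} {x : E}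
    (hΩ : IsOpen Ω) (hx : x ∈ Ω) (hε : ε ≠ 0) (ha : ∀ i j, Differentiable ℝ (a i j))
    (hN : ∀ m, Differentiable ℝ (N m)) (hN' : ∀ j m, Differentiable ℝ (pderiv' n j (N m)))
    (hM : ∀ k l, Differentiable ℝ (M k l))
    (hM' : ∀ j k l, Differentiable ℝ (pderiv' n j (M k l))) (hu₀ : ContDiffOn ℝ 4 u₀ Ω)
    (i : Fin n) :
    pderiv' n i
        (fun x' => ∑ j, a i j (ε⁻¹ • x') * pderiv' n j (secondOrderAnsatz N M u₀ ε) x') x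
      = (ε⁻¹ * ∑ m, pderiv' n i (firstFlux a N i m) (ε⁻¹ • x) * pderiv' n m u₀ x
          + ∑ m, firstFlux a N i m (ε⁻¹ • x) * pderiv' n i (pderiv' n m u₀) x)
        + ε * (ε⁻¹ * ∑ p, pderiv' n i (secondFlux a N M i p) (ε⁻¹ • x)
            * pderiv' n p.1 (pderiv' n p.2 u₀) x
          + ∑ p, secondFlux a N M i p (ε⁻¹ • x)
            * pderiv' n i (pderiv' n p.1 (pderiv' n p.2 u₀)) x)
        + ε ^ 2 * (ε⁻¹ * ∑ q, pderiv' n i (thirdFlux a M i q) (ε⁻¹ • x)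
            * pderiv' n q.1 (pderiv' n q.2.1 (pderiv' n q.2.2 u₀)) x
          + ∑ q, thirdFlux a M i q (ε⁻¹ • x)
            * pderiv' n i (pderiv' n q.1 (pderiv' n q.2.1 (pderiv' n q.2.2 u₀))) x) := by
  obtain ⟨-, hu₁, hu₂, hu₃⟩ := differentiableAt_iterated_pderiv' hu₀ hΩ hx
  have hP m := differentiable_firstFlux ha hN' i m (ε⁻¹ • x)
  have hQ p := differentiable_secondFlux ha hN hM' i p (ε⁻¹ • x)
  have hR q := differentiable_thirdFlux ha hM i q (ε⁻¹ • x)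
  have hU₂ (p : Fin n × Fin n) := hu₂ p.1 p.2
  have hU₃ (q : Fin n × Fin n × Fin n) := hu₃ q.1 q.2.1 q.2.2
  have h₁ := differentiableAt_sum_mul_comp_smul hP hu₁
  have h₂ := differentiableAt_sum_mul_comp_smul hQ hU₂
  have h₃ := differentiableAt_sum_mul_comp_smul hR hU₃
  rw [pderiv'_congr_of_eventuallyEq (flux_secondOrderAnsatz_eventuallyEq hΩ hx hε hN hM hu₀ i),
    pderiv'_add (h₁.fun_add (h₂.const_mul ε)) (h₃.const_mul _), pderiv'_add h₁ (h₂.const_mul ε),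
    pderiv'_const_mul h₂, pderiv'_const_mul h₃, pderiv'_sum_mul_comp_smul hP hu₁,
    pderiv'_sum_mul_comp_smul hQ hU₂, pderiv'_sum_mul_comp_smul hR hU₃]

noncomputable def ansatzRemainder (a : Fin n → Fin n → E → ℝ) (N : Fin n → E → ℝ)
    (M : Fin n → Fin n → E → ℝ) (u₀ : E → ℝ) (ε : ℝ) (x : E) : ℝ :=
  ∑ i, ∑ p, secondFlux a N M i p (ε⁻¹ • x) * pderiv' n i (pderiv' n p.1 (pderiv' n p.2 u₀)) x
    + ∑ i, ∑ q, pderiv' n i (thirdFlux a M i q) (ε⁻¹ • x)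
        * pderiv' n q.1 (pderiv' n q.2.1 (pderiv' n q.2.2 u₀)) x
    + ε * ∑ i, ∑ q, thirdFlux a M i q (ε⁻¹ • x)
        * pderiv' n i (pderiv' n q.1 (pderiv' n q.2.1 (pderiv' n q.2.2 u₀))) x

theorem sum_pderiv'_flux_secondOrderAnsatz {a0 : Fin n → Fin n → ℝ} {u₀ : E → ℝ}
    {Ω : Set E} {ε : ℝ} {x : E} (hΩ : IsOpen Ω) (hx : x ∈ Ω) (hε : ε ≠ 0)
    (ha : ∀ i j, ContDiff ℝ 1 (a i j)) (hN : ∀ m, ContDiff ℝ 2 (N m))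
    (hM : ∀ k l, ContDiff ℝ 2 (M k l)) (hu₀ : ContDiffOn ℝ 4 u₀ Ω)
    (hNcell : ∀ (m : Fin n) (y : E),
      (∑ i, pderiv' n i (fun z => ∑ j, a i j z * pderiv' n j (N m) z) y)
        = -∑ i, pderiv' n i (a i m) y)
    (hMcell : ∀ (k l : Fin n) (y : E),
      -(∑ i, pderiv' n i (fun z => ∑ j, a i j z * pderiv' n j (M k l) z) y)
        = a k l y + (∑ m, a k m y * pderiv' n m (N l) y) - a0 k l
          + ∑ i, pderiv' n i (fun z => a i k z * N l z) y) :
    ∑ i, pderiv' n i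
        (fun x' => ∑ j, a i j (ε⁻¹ • x') * pderiv' n j (secondOrderAnsatz N M u₀ ε) x') x
      = ∑ k, ∑ l, a0 k l * pderiv' n k (pderiv' n l u₀) x
        + ε * ansatzRemainder a N M u₀ ε x := by
  have ha' i j := (ha i j).differentiable one_ne_zero
  have hN' m := (hN m).differentiable two_ne_zero
  have hM' k l := (hM k l).differentiable two_ne_zero
  have hN'' j m := differentiable_pderiv' (hN m) j
  have hM'' j k l := differentiable_pderiv' (hM k l) j
  have e₁ : ∑ i, ∑ m, pderiv' n i (firstFlux a N i m) (ε⁻¹ • x) * pderiv' n m u₀ x = 0 := by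
    rw [Finset.sum_comm]
    simp only [← Finset.sum_mul, sum_pderiv'_firstFlux ha' hN'' hNcell, zero_mul,
      Finset.sum_const_zero]
  have e₂ : ∑ i, ∑ p, pderiv' n i (secondFlux a N M i p) (ε⁻¹ • x)
        * pderiv' n p.1 (pderiv' n p.2 u₀) x
      = ∑ p : Fin n × Fin n, a0 p.1 p.2 * pderiv' n p.1 (pderiv' n p.2 u₀) x
        - ∑ p : Fin n × Fin n,
            firstFlux a N p.1 p.2 (ε⁻¹ • x) * pderiv' n p.1 (pderiv' n p.2 u₀) x := by
    rw [Finset.sum_comm, ← Finset.sum_sub_distrib]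
    simp only [← Finset.sum_mul, sum_pderiv'_secondFlux ha' hN' hM'' hMcell, sub_mul]
  simp only [pderiv'_flux_secondOrderAnsatz hΩ hx hε ha' hN' hN'' hM' hM'' hu₀,
    Finset.sum_add_distrib, ← Finset.mul_sum]
  rw [e₁, e₂, ansatzRemainder]
  simp only [Fintype.sum_prod_type]
  field_simp
  ring

theorem abs_ansatzRemainder_le {u₀ : E → ℝ} {ε Ka Kn Km Ku : ℝ} {x : E} (hε : |ε| ≤ 1)
    (ha : ∀ i j, Differentiable ℝ (a i j)) (hM : ∀ k l, Differentiable ℝ (M k l))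
    (habd : ∀ i j y, |a i j y| ≤ Ka) (habd' : ∀ i j y, ‖fderiv ℝ (a i j) y‖ ≤ Ka)
    (hNbd : ∀ m y, |N m y| ≤ Kn) (hMbd : ∀ k l y, |M k l y| ≤ Km)
    (hMbd' : ∀ k l y, ‖fderiv ℝ (M k l) y‖ ≤ Km)
    (hu₃ : ∀ i j k, |pderiv' n i (pderiv' n j (pderiv' n k u₀)) x| ≤ Ku)
    (hu₄ : ∀ i j k l, |pderiv' n i (pderiv' n j (pderiv' n k (pderiv' n l u₀))) x| ≤ Ku) :
    |ansatzRemainder a N M u₀ ε x|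
      ≤ n * (n * n * ((Ka * Kn + n * (Ka * Km)) * Ku))
        + n * (n * (n * n) * ((Ka * Km + Ka * Km) * Ku))
        + n * (n * (n * n) * (Ka * Km * Ku)) := by
  have h₁ := abs_sum_le_card_mul fun i => abs_sum_le_card_mul fun p =>
    abs_mul_le_of_le (abs_secondFlux_le habd hNbd hMbd' i p (ε⁻¹ • x)) (hu₃ i p.1 p.2)
  have h₂ := abs_sum_le_card_mul fun i => abs_sum_le_card_mul fun q =>
    abs_mul_le_of_le (abs_pderiv'_thirdFlux_le ha hM habd habd' hMbd hMbd' i q (ε⁻¹ • x))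
      (hu₃ q.1 q.2.1 q.2.2)
  have h₃ := abs_sum_le_card_mul fun i => abs_sum_le_card_mul fun q =>
    abs_mul_le_of_le (show |thirdFlux a M i q (ε⁻¹ • x)| ≤ Ka * Km from
      abs_mul_le_of_le (habd _ _ _) (hMbd _ _ _)) (hu₄ i q.1 q.2.1 q.2.2)
  simp only [Fintype.card_prod, Fintype.card_fin, Nat.cast_mul] at h₁ h₂ h₃
  have hε₃ := (abs_mul _ _).trans_le (mul_le_of_le_one_left (abs_nonneg _) hε) |>.trans h₃
  exact (abs_add_three _ _ _).trans (add_le_add (add_le_add h₁ h₂) hε₃)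

end Homogenization

theorem second_order_ansatz_residual_O_eps_general
    (n : ℕ) (Ω : Set (EuclideanSpace ℝ (Fin n)))
    (hΩ : IsOpen Ω)
    (a : Fin n → Fin n → EuclideanSpace ℝ (Fin n) → ℝ)
    (N : Fin n → EuclideanSpace ℝ (Fin n) → ℝ)
    (M : Fin n → Fin n → EuclideanSpace ℝ (Fin n) → ℝ)
    (u₀ f : EuclideanSpace ℝ (Fin n) → ℝ)
    (a0 : Fin n → Fin n → ℝ)
    (Ka Kn Km Ku : ℝ)
    -- the coefficients
    (ha : ∀ i j, ContDiff ℝ 1 (a i j))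
    (habd : ∀ i j y, |a i j y| ≤ Ka)
    (habd' : ∀ i j y, ‖fderiv ℝ (a i j) y‖ ≤ Ka)
    -- the first-order correctors
    (hN : ∀ m, ContDiff ℝ 2 (N m))
    (hNbd : ∀ m y, |N m y| ≤ Kn)
    (hNcell : ∀ (m : Fin n) (y : EuclideanSpace ℝ (Fin n)),
      (∑ i, pderiv' n i (fun z => ∑ j, a i j z * pderiv' n j (N m) z) y)
        = -∑ i, pderiv' n i (a i m) y)
    -- the second-order correctors
    (hM : ∀ k l, ContDiff ℝ 2 (M k l))
    (hMbd : ∀ k l y, |M k l y| ≤ Km)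
    (hMbd' : ∀ k l y, ‖fderiv ℝ (M k l) y‖ ≤ Km)
    (hMcell : ∀ (k l : Fin n) (y : EuclideanSpace ℝ (Fin n)),
      -(∑ i, pderiv' n i (fun z => ∑ j, a i j z * pderiv' n j (M k l) z) y)
        = a k l y + (∑ m, a k m y * pderiv' n m (N l) y) - a0 k l
          + ∑ i, pderiv' n i (fun z => a i k z * N l z) y)
    -- the homogenized solution
    (hu₀ : ContDiffOn ℝ 4 u₀ Ω)
    (hu₀bd3 : ∀ x ∈ Ω, ∀ i j k, |pderiv' n i (pderiv' n j (pderiv' n k u₀)) x| ≤ Ku)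
    (hu₀bd4 : ∀ x ∈ Ω, ∀ i j k l,
      |pderiv' n i (pderiv' n j (pderiv' n k (pderiv' n l u₀))) x| ≤ Ku)
    (hu₀f : ∀ x ∈ Ω, -(∑ i, ∑ j, a0 i j * pderiv' n i (pderiv' n j u₀) x) = f x) :
    ∃ C : ℝ, ∀ ε : ℝ, 0 < ε → ε ≤ 1 → ∀ x ∈ Ω,
      |(-(∑ i, pderiv' n i
            (fun x' => ∑ j, a i j (ε⁻¹ • x') *
              pderiv' n j
                (fun x'' => u₀ x''
                  + ε * ∑ m, N m (ε⁻¹ • x'') * pderiv' n m u₀ x''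
                  + ε ^ 2 * ∑ k, ∑ l,
                      M k l (ε⁻¹ • x'') * pderiv' n k (pderiv' n l u₀) x'') x') x))
          - f x| ≤ C * ε := by
  refine ⟨n * (n * n * ((Ka * Kn + n * (Ka * Km)) * Ku))
      + n * (n * (n * n) * ((Ka * Km + Ka * Km) * Ku)) + n * (n * (n * n) * (Ka * Km * Ku)),
    fun ε hε hε₁ x hx => ?_⟩
  have hres := Homogenization.sum_pderiv'_flux_secondOrderAnsatz hΩ hx hε.ne' ha hN hM hu₀
    hNcell hMcell
  have hR := Homogenization.abs_ansatzRemainder_le (ε := ε) (abs_le.mpr ⟨by linarith, hε₁⟩)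
    (fun i j => (ha i j).differentiable one_ne_zero)
    (fun k l => (hM k l).differentiable two_ne_zero) habd habd' hNbd hMbd hMbd'
    (hu₀bd3 x hx) (hu₀bd4 x hx)
  calc |-(∑ i, pderiv' n i (fun x' => ∑ j, a i j (ε⁻¹ • x') *
          pderiv' n j (Homogenization.secondOrderAnsatz N M u₀ ε) x') x) - f x|
      = ε * |Homogenization.ansatzRemainder a N M u₀ ε x| := by
        rw [hres, ← hu₀f x hx, add_comm, neg_add, add_sub_cancel_right, abs_neg, abs_mul,
          abs_of_pos hε]
    _ ≤ _ := mul_le_mul_of_nonneg_left hR hε.le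
    _ = _ := mul_comm _ _

/-- With `A = (a_{ij})` `C¹`, ℤⁿ-periodic, bounded with bounded first
derivatives; `N_m ∈ C²` ℤⁿ-periodic bounded solutions (with bounded first and second
derivatives) of the first cell problem `∂_{yᵢ}(a_{ij}∂_{yⱼ}N_m) = −∂_{yᵢ}a_{im}`;
`a⁰_{kl} = ∫_Y (a_{kl} + a_{km}∂_{y_m}N_l) dy`; `M_{kl} ∈ C²` ℤⁿ-periodic bounded solutions
(with bounded first derivatives) of the second cell problem
`−∂_{yᵢ}(a_{ij}∂_{yⱼ}M_{kl}) = a_{kl} + a_{km}∂_{y_m}N_l − a⁰_{kl} + ∂_{yᵢ}(a_{ik}N_l)`;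
and `u₀ ∈ C⁴(Ω)` a solution of the homogenized equation `−a⁰_{ij}∂²_{ij}u₀ = f` on the
open bounded set `Ω` with all partial derivatives up to order 4 bounded, there is a
constant `C` such that for all `0 < ε ≤ 1` the second-order approximation
`u_ε^{(2)} = u₀ + ε N_m(x/ε) ∂_m u₀ + ε² M_{kl}(x/ε) ∂²_{kl}u₀` satisfies
`sup_Ω |−∂_{xᵢ}(a_{ij}(x/ε) ∂_{xⱼ} u_ε^{(2)}) − f| ≤ C ε`. -/
theorem second_order_ansatz_residual_O_eps
    (n : ℕ) (Ω : Set (EuclideanSpace ℝ (Fin n)))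
    (hΩ : IsOpen Ω) (hΩb : Bornology.IsBounded Ω)
    (a : Fin n → Fin n → EuclideanSpace ℝ (Fin n) → ℝ)
    (N : Fin n → EuclideanSpace ℝ (Fin n) → ℝ)
    (M : Fin n → Fin n → EuclideanSpace ℝ (Fin n) → ℝ)
    (u₀ f : EuclideanSpace ℝ (Fin n) → ℝ)
    (a0 : Fin n → Fin n → ℝ)
    (Ka Kn Km Ku : ℝ)
    -- the coefficients
    (ha : ∀ i j, ContDiff ℝ 1 (a i j))
    (haper : ∀ i j, ZnPeriodic n (a i j))
    (habd : ∀ i j y, |a i j y| ≤ Ka)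
    (habd' : ∀ i j y, ‖fderiv ℝ (a i j) y‖ ≤ Ka)
    -- the first-order correctors
    (hN : ∀ m, ContDiff ℝ 2 (N m))
    (hNper : ∀ m, ZnPeriodic n (N m))
    (hNbd : ∀ m y, |N m y| ≤ Kn)
    (hNbd' : ∀ m y, ‖fderiv ℝ (N m) y‖ ≤ Kn)
    (hNbd'' : ∀ m y, ‖iteratedFDeriv ℝ 2 (N m) y‖ ≤ Kn)
    (hNcell : ∀ (m : Fin n) (y : EuclideanSpace ℝ (Fin n)),
      (∑ i, pderiv' n i (fun z => ∑ j, a i j z * pderiv' n j (N m) z) y)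
        = -∑ i, pderiv' n i (a i m) y)
    -- the homogenized coefficients
    (ha0 : ∀ k l, a0 k l
      = ∫ y in unitCell n, (a k l y + ∑ m, a k m y * pderiv' n m (N l) y))
    -- the second-order correctors
    (hM : ∀ k l, ContDiff ℝ 2 (M k l))
    (hMper : ∀ k l, ZnPeriodic n (M k l))
    (hMbd : ∀ k l y, |M k l y| ≤ Km)
    (hMbd' : ∀ k l y, ‖fderiv ℝ (M k l) y‖ ≤ Km)
    (hMcell : ∀ (k l : Fin n) (y : EuclideanSpace ℝ (Fin n)),
      -(∑ i, pderiv' n i (fun z => ∑ j, a i j z * pderiv' n j (M k l) z) y)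
        = a k l y + (∑ m, a k m y * pderiv' n m (N l) y) - a0 k l
          + ∑ i, pderiv' n i (fun z => a i k z * N l z) y)
    -- the homogenized solution
    (hu₀ : ContDiffOn ℝ 4 u₀ Ω)
    (hu₀bd : ∀ x ∈ Ω, |u₀ x| ≤ Ku)
    (hu₀bd1 : ∀ x ∈ Ω, ∀ i, |pderiv' n i u₀ x| ≤ Ku)
    (hu₀bd2 : ∀ x ∈ Ω, ∀ i j, |pderiv' n i (pderiv' n j u₀) x| ≤ Ku)
    (hu₀bd3 : ∀ x ∈ Ω, ∀ i j k, |pderiv' n i (pderiv' n j (pderiv' n k u₀)) x| ≤ Ku)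
    (hu₀bd4 : ∀ x ∈ Ω, ∀ i j k l,
      |pderiv' n i (pderiv' n j (pderiv' n k (pderiv' n l u₀))) x| ≤ Ku)
    (hu₀f : ∀ x ∈ Ω, -(∑ i, ∑ j, a0 i j * pderiv' n i (pderiv' n j u₀) x) = f x) :
    ∃ C : ℝ, ∀ ε : ℝ, 0 < ε → ε ≤ 1 → ∀ x ∈ Ω,
      |(-(∑ i, pderiv' n i
            (fun x' => ∑ j, a i j (ε⁻¹ • x') *
              pderiv' n j
                (fun x'' => u₀ x''
                  + ε * ∑ m, N m (ε⁻¹ • x'') * pderiv' n m u₀ x''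
                  + ε ^ 2 * ∑ k, ∑ l,
                      M k l (ε⁻¹ • x'') * pderiv' n k (pderiv' n l u₀) x'') x') x))
          - f x| ≤ C * ε :=
  second_order_ansatz_residual_O_eps_general n Ω hΩ a N M u₀ f a0 Ka Kn Km Ku ha habd habd' hN hNbd
    hNcell hM hMbd hMbd' hMcell hu₀ hu₀bd3 hu₀bd4 hu₀f
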